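/- The product (y+z+1)_m (y+2z+1)_m times the terminating sum Σ_{k=0}^{2m+1} (-2m-1)_k (y+2z+2m+2)_k (y+z+1/2)_k (y+2z+m+1)_k (z+m+1)_k / (k! (y/2+z+1/2)_k (y/2+z+1)_k (2z+2m+2)_k (2y+2z+1)_k), viewed as a function of y for fixed generic z, agrees with a polynomial in y of degree at most 2m. -/
import Mathlib

/-- The rising factorial (Pochhammer symbol) `(a)_k`. -/
noncomputable def rf (a : ℂ) (k : ℕ) : ℂ := (ascPochhammer ℂ k).eval a

lemma rf_add (a : ℂ) (p q : ℕ) : rf a (p + q) = rf a p * rf (a + p) q := by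
  unfold rf
  have h := congrArg (Polynomial.eval a) (ascPochhammer_mul (S := ℂ) p q)
  simpa [Polynomial.eval_comp] using h.symm

lemma rf_one (a : ℂ) : rf a 1 = a := by simp [rf]

lemma rf_succ (a : ℂ) (n : ℕ) : rf a (n + 1) = rf a n * (a + n) := by
  rw [rf_add, rf_one]

lemma rf_dup (a : ℂ) (k : ℕ) :
    rf a k * rf (a + 1/2) k * ((2:ℂ)^k * (2:ℂ)^k) = rf (2*a) (2*k) := by
  induction k with
  | zero => simp [rf]
  | succ k ih =>
    rw [show 2*(k+1) = (2*k+1)+1 by ring, rf_succ, rf_succ, rf_succ, rf_succ]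
    push_cast
    linear_combination (2*a+2*(k:ℂ)) * (2*a+2*(k:ℂ)+1) * ih

lemma rf_half (b : ℂ) (k : ℕ) :
    rf (2*b) k = 2^k * rf b ((k+1)/2) * rf (b + 1/2) (k/2) := by
  rcases Nat.even_or_odd k with ⟨j, hj⟩ | ⟨j, hj⟩
  · subst hj
    rw [show j + j = 2*j by ring, show (2*j+1)/2 = j by omega, show 2*j/2 = j by omega,
      ← rf_dup, two_mul, pow_add]
    ring
  · subst hj
    rw [rf_succ, show (2*j+1+1)/2 = j+1 by omega,
      show (2*j+1)/2 = j by omega, ← rf_dup, rf_succ]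
    push_cast
    ring

noncomputable def pp (a : ℂ) (n : ℕ) : Polynomial ℂ :=
  (ascPochhammer ℂ n).comp (Polynomial.X + Polynomial.C a)

lemma pp_eval (a : ℂ) (n : ℕ) (y : ℂ) : (pp a n).eval y = rf (y + a) n := by
  simp [pp, rf, Polynomial.eval_comp]

lemma pp_degree (a : ℂ) (n : ℕ) : (pp a n).degree ≤ n := by
  refine le_trans (Polynomial.degree_le_natDegree) ?_
  have h : (pp a n).natDegree ≤ n := by
    refine le_trans (Polynomial.natDegree_comp_le) ?_
    simp [Polynomial.natDegree_X_add_C, ascPochhammer_natDegree]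
  exact_mod_cast h

lemma term_alg (q1 q2 n1 n2 n3 n4 n5 pm1 pm2 d1 d2 d3 d4 fk t : ℂ)
    (hfk : fk ≠ 0) (hd1 : d1 ≠ 0) (hd2 : d2 ≠ 0) (hd3 : d3 ≠ 0) (hd4 : d4 ≠ 0)
    (K1 : n3 * pm1 * t = d4 * q1) (K2 : pm2 * n4 * n2 = d1 * d2 * (t * t) * q2) :
    n1 * n5 * t / (fk * d3) * q1 * q2 =
      pm1 * pm2 * (n1 * n2 * n3 * n4 * n5 / (fk * d1 * d2 * d3 * d4)) := by
  rw [div_mul_eq_mul_div, div_mul_eq_mul_div, mul_div_assoc',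
    div_eq_div_iff (by simp [hfk, hd3]) (by simp [hfk, hd1, hd2, hd3, hd4])]
  linear_combination -n1 * n5 * q2 * d1 * d2 * fk * d3 * t * K1 +
    -n1 * n5 * n3 * pm1 * fk * d3 * K2

noncomputable def Q1p (m : ℕ) (z : ℂ) (k : ℕ) : Polynomial ℂ :=
  pp (z + 1/2 + (((k+1)/2 : ℕ) : ℂ)) (k/2) * pp (z + 1 + ((k/2 : ℕ) : ℂ)) (m - k/2)

noncomputable def Q2p (m : ℕ) (z : ℂ) (k : ℕ) : Polynomial ℂ :=
  if k ≤ m then pp (2*z + 2*m + 2) k * pp (2*z + 1 + ((2*k : ℕ) : ℂ)) (m - k)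
  else pp (2*z + 2*m + 2) (k - m - 1) * pp (2*z + 1 + ((2*k : ℕ) : ℂ)) (2*m + 1 - k)

lemma K1lem (m : ℕ) (z y : ℂ) (k : ℕ) (hk : k ≤ 2*m+1) :
    rf (y + z + 1/2) k * rf (y + z + 1) m * 2^k
      = rf (2*y + 2*z + 1) k * (Q1p m z k).eval y := by
  rw [Q1p, Polynomial.eval_mul, pp_eval, pp_eval]
  have e1 := rf_add (y+z+1/2) ((k+1)/2) (k/2)
  rw [show (k+1)/2 + k/2 = k by omega] at e1
  have e2 := rf_add (y+z+1) (k/2) (m - k/2)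
  rw [show k/2 + (m - k/2) = m by omega] at e2
  have e3 := rf_half (y+z+1/2) k
  rw [show 2*(y+z+1/2) = 2*y+2*z+1 by ring, show y+z+1/2+1/2 = y+z+1 by ring] at e3
  rw [e1, e2, e3,
    show y+z+1/2+(((k+1)/2 : ℕ) : ℂ) = y+(z+1/2+(((k+1)/2 : ℕ) : ℂ)) by ring,
    show y+z+1+((k/2 : ℕ) : ℂ) = y+(z+1+((k/2 : ℕ) : ℂ)) by ring]
  ring

lemma K2lem (m : ℕ) (z y : ℂ) (k : ℕ) (hk : k ≤ 2*m+1) :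
    rf (y + 2*z + 1) m * rf (y + 2*z + m + 1) k * rf (y + 2*z + 2*m + 2) k
      = rf (y/2 + z + 1/2) k * rf (y/2 + z + 1) k * ((2:ℂ)^k * (2:ℂ)^k)
          * (Q2p m z k).eval y := by
  have f1 := rf_dup (y/2+z+1/2) k
  rw [show y/2+z+1/2+1/2 = y/2+z+1 by ring, show 2*(y/2+z+1/2) = y+2*z+1 by ring] at f1
  have f2 := rf_add (y+2*z+1) m k
  rw [show (y+2*z+1 : ℂ) + (m : ℕ) = y+2*z+(m : ℂ)+1 by ring] at f2
  by_cases hkm : k ≤ m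
  · rw [Q2p, if_pos hkm, Polynomial.eval_mul, pp_eval, pp_eval,
      show y + (2*z+2*(m : ℂ)+2) = y+2*z+2*(m : ℂ)+2 by ring]
    have f3 := rf_add (y+2*z+1) (2*k) (m-k)
    rw [show 2*k + (m-k) = m + k by omega,
      show (y+2*z+1 : ℂ) + ((2*k : ℕ) : ℂ) = y+(2*z+1+((2*k : ℕ) : ℂ)) by ring] at f3
    rw [← f2, f1, f3]
    ring
  · rw [Q2p, if_neg hkm, Polynomial.eval_mul, pp_eval, pp_eval,
      show y + (2*z+2*(m : ℂ)+2) = y+2*z+2*(m : ℂ)+2 by ring]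
    have hmk : m + 1 ≤ k := by omega
    have f3 := rf_add (y+2*z+1) (m+k) (k-m)
    rw [show (m+k) + (k-m) = 2*k by omega] at f3
    have g1 := rf_add (y+2*z+2*(m:ℂ)+2) (k-m-1) (m+1)
    rw [show (k-m-1) + (m+1) = k by omega,
      show (y+2*z+2*(m:ℂ)+2) + ((k-m-1 : ℕ) : ℂ) = y+2*z+1+((m+k : ℕ) : ℂ) by
        rw [show k-m-1 = k-(m+1) by omega, Nat.cast_sub hmk]; push_cast; ring] at g1
    have g2 := rf_add (y+2*z+1+((m+k : ℕ) : ℂ)) (k-m) (2*m+1-k)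
    rw [show (k-m) + (2*m+1-k) = m+1 by omega,
      show (y+2*z+1+((m+k : ℕ) : ℂ)) + ((k-m : ℕ) : ℂ) = y+(2*z+1+((2*k : ℕ) : ℂ)) by
        rw [Nat.cast_sub (by omega : m ≤ k)]; push_cast; ring] at g2
    rw [g2] at g1
    rw [g1, ← f2, f1, f3]
    ring

lemma q1p_degree (m : ℕ) (z : ℂ) (k : ℕ) (hk : k ≤ 2*m+1) :
    (Q1p m z k).degree ≤ (m : ℕ) := by
  refine le_trans (Polynomial.degree_mul_le _ _) ?_
  refine le_trans (add_le_add (pp_degree _ _) (pp_degree _ _)) ?_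
  rw [← Nat.cast_add, show k/2 + (m - k/2) = m by omega]

lemma q2p_degree (m : ℕ) (z : ℂ) (k : ℕ) (hk : k ≤ 2*m+1) :
    (Q2p m z k).degree ≤ (m : ℕ) := by
  by_cases hkm : k ≤ m
  · rw [Q2p, if_pos hkm]
    refine le_trans (Polynomial.degree_mul_le _ _) ?_
    refine le_trans (add_le_add (pp_degree _ _) (pp_degree _ _)) ?_
    rw [← Nat.cast_add, show k + (m - k) = m by omega]
  · rw [Q2p, if_neg hkm]
    refine le_trans (Polynomial.degree_mul_le _ _) ?_
    refine le_trans (add_le_add (pp_degree _ _) (pp_degree _ _)) ?_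
    rw [← Nat.cast_add, show (k-m-1) + (2*m+1-k) = m by omega]

theorem andrews_sum_times_factors_is_poly (m : ℕ) (z : ℂ) :
    ∃ P : Polynomial ℂ, P.degree ≤ (2 * m : ℕ) ∧
      ∀ y : ℂ,
        (∀ k ≤ 2 * m + 1,
          rf (y / 2 + z + 1 / 2) k ≠ 0 ∧ rf (y / 2 + z + 1) k ≠ 0 ∧
            rf (2 * z + 2 * m + 2) k ≠ 0 ∧ rf (2 * y + 2 * z + 1) k ≠ 0) →
        P.eval y =
          rf (y + z + 1) m * rf (y + 2 * z + 1) m *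
            ∑ k ∈ Finset.range (2 * m + 2),
              rf (-2 * m - 1) k * rf (y + 2 * z + 2 * m + 2) k * rf (y + z + 1 / 2) k *
                  rf (y + 2 * z + m + 1) k * rf (z + m + 1) k /
                ((k.factorial : ℂ) * rf (y / 2 + z + 1 / 2) k * rf (y / 2 + z + 1) k *
                  rf (2 * z + 2 * m + 2) k * rf (2 * y + 2 * z + 1) k) := by
  refine ⟨∑ k ∈ Finset.range (2*m+2),
    Polynomial.C (rf (-2*m-1) k * rf (z+m+1) k * 2^k
      / ((k.factorial : ℂ) * rf (2*z+2*m+2) k)) * Q1p m z k * Q2p m z k, ?_, ?_⟩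
  · refine le_trans (Polynomial.degree_sum_le _ _) ?_
    refine Finset.sup_le fun k hk => ?_
    have hk' : k ≤ 2*m+1 := by have := Finset.mem_range.mp hk; omega
    refine le_trans (Polynomial.degree_mul_le _ _) ?_
    refine le_trans (add_le_add
      (le_trans (Polynomial.degree_mul_le _ _)
        (add_le_add Polynomial.degree_C_le (q1p_degree m z k hk')))
      (q2p_degree m z k hk')) ?_
    rw [zero_add, ← Nat.cast_add, two_mul]
  · intro y h
    rw [Polynomial.eval_finset_sum, Finset.mul_sum]
    refine Finset.sum_congr rfl fun k hk => ?_
    have hk' : k ≤ 2*m+1 := by have := Finset.mem_range.mp hk; omega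
    obtain ⟨hd1, hd2, hd3, hd4⟩ := h k hk'
    simp only [Polynomial.eval_mul, Polynomial.eval_C]
    exact term_alg _ _ _ _ _ _ _ _ _ _ _ _ _ _ _
      (Nat.cast_ne_zero.mpr k.factorial_ne_zero) hd1 hd2 hd3 hd4
      (K1lem m z y k hk') (K2lem m z y k hk')
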